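/- Fix j ∈ {1,…,p}, fix ψ₀ ∈ ℝ, β ∈ ℝᵖ, and τ_ℓ for ℓ ≠ j, and let uⱼ = ψ₀βⱼ (A ∘ Xⱼ) ∈ ℝⁿ. Then τⱼ = 0 is a global minimizer of the function τⱼ ↦ Q(β₁,…,β_p, ψ₀, τ₁,…,τ_p) if and only if |(1/n)·uⱼᵀW R₍₋ⱼA₎| ≤ λα, where uⱼᵀW R₍₋ⱼA₎ = Σᵢ wᵢ (uⱼ)ᵢ (R₍₋ⱼA₎)ᵢ. -/

import Mathlib

/-!
The coordinate `τⱼ` enters the residual only through `R₍₋ⱼA₎ - τⱼ uⱼ`, so along that coordinate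
`Q(τⱼ) - Q(0) = a τⱼ² - b τⱼ + λα |τⱼ|` with `a = uⱼᵀW uⱼ / (2n) ≥ 0` and `b = uⱼᵀW R₍₋ⱼA₎ / n`.
Such a function is nonnegative iff `|b| ≤ λα`: near `0` the quadratic term is negligible against
the two linear ones.
-/

/-- Soft-thresholding operator `S(x, u) = sign(x) · (|x| − u)₊`. -/
noncomputable def softThresh (x u : ℝ) : ℝ := Real.sign x * max (|x| - u) 0

/-- Reparametrized weighted loss
`L*(θ) = (1/(2n)) Σᵢ wᵢ (Yᵢ − ψ₀Aᵢ − Σⱼ Xᵢⱼβⱼ − Σⱼ ψ₀τⱼβⱼ AᵢXᵢⱼ)²`. -/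
noncomputable def Lstar (n p : ℕ) (Y A : Fin n → ℝ) (X : Fin n → Fin p → ℝ)
    (w : Fin n → ℝ) (β : Fin p → ℝ) (ψ0 : ℝ) (τ : Fin p → ℝ) : ℝ :=
  1 / (2 * (n : ℝ)) * ∑ i, w i *
    (Y i - ψ0 * A i - (∑ j, X i j * β j) - ∑ j, ψ0 * τ j * β j * A i * X i j) ^ 2

/-- Penalized objective
`Q(θ) = L*(θ) + λ(1−α)(Σⱼ|βⱼ| + |ψ₀|) + λα Σⱼ|τⱼ|`. -/
noncomputable def Qobj (n p : ℕ) (Y A : Fin n → ℝ) (X : Fin n → Fin p → ℝ)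
    (w : Fin n → ℝ) (lam alpha : ℝ) (β : Fin p → ℝ) (ψ0 : ℝ) (τ : Fin p → ℝ) : ℝ :=
  Lstar n p Y A X w β ψ0 τ
    + lam * (1 - alpha) * ((∑ j, |β j|) + |ψ0|) + lam * alpha * ∑ j, |τ j|

open Finset

theorem Finset.sum_update_eq_add_sum_erase {ι α M : Type*} [Fintype ι] [DecidableEq ι]
    [AddCommMonoid M] (g : ι → α → M) (τ : ι → α) (j : ι) (t : α) :
    ∑ l, g l (Function.update τ j t l) = g j t + ∑ l ∈ univ.erase j, g l (τ l) := by
  rw [← add_sum_erase _ _ (mem_univ j), Function.update_self]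
  congr 1
  exact sum_congr rfl fun l hl => by rw [Function.update_of_ne (ne_of_mem_erase hl)]

theorem Finset.sum_mul_sub_mul_sq {ι : Type*} [Fintype ι] (w r u : ι → ℝ) (t : ℝ) :
    ∑ i, w i * (r i - t * u i) ^ 2
      = ∑ i, w i * r i ^ 2 - 2 * t * ∑ i, w i * u i * r i + t ^ 2 * ∑ i, w i * u i ^ 2 := by
  simp only [mul_sum, ← sum_sub_distrib, ← sum_add_distrib]
  exact sum_congr rfl fun i _ => by ring

theorem forall_nonneg_quadratic_add_abs_iff {a b c : ℝ} (ha : 0 ≤ a) :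
    (∀ t : ℝ, 0 ≤ a * t ^ 2 - b * t + c * |t|) ↔ |b| ≤ c := by
  constructor
  · intro h
    by_contra! hlt
    -- at `t = ± s` with the sign of `b`, the value is `s * (a * s - (|b| - c)) = -s ^ 2`
    set s := (|b| - c) / (a + 1)
    have hs : 0 < s := div_pos (by linarith) (by linarith)
    have hs_eq : (a + 1) * s = |b| - c := mul_div_cancel₀ _ (by linarith)
    have hval : 0 ≤ a * s ^ 2 - |b| * s + c * s := by
      rcases abs_choice b with hb | hb
      · simpa [hb, abs_of_pos hs] using h s
      · simpa [hb, abs_of_pos hs, neg_sq] using h (-s)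
    nlinarith
  · intro hb t
    have hbt : b * t ≤ c * |t| :=
      calc b * t ≤ |b * t| := le_abs_self _
        _ = |b| * |t| := abs_mul b t
        _ ≤ c * |t| := mul_le_mul_of_nonneg_right hb (abs_nonneg t)
    nlinarith [sq_nonneg t]

noncomputable def partialResidual (n p : ℕ) (Y A : Fin n → ℝ) (X : Fin n → Fin p → ℝ)
    (β : Fin p → ℝ) (ψ0 : ℝ) (τ : Fin p → ℝ) (j : Fin p) : Fin n → ℝ := fun i =>
  Y i - (∑ l, X i l * β l) - ψ0 * A i - ∑ l ∈ univ.erase j, ψ0 * τ l * β l * A i * X i l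

section CoordinateObjective

variable {n p : ℕ} (Y A : Fin n → ℝ) (X : Fin n → Fin p → ℝ) (w : Fin n → ℝ)
  (β : Fin p → ℝ) (ψ0 : ℝ) (τ : Fin p → ℝ) (j : Fin p)

theorem Lstar_update (t : ℝ) :
    Lstar n p Y A X w β ψ0 (Function.update τ j t) = 1 / (2 * (n : ℝ)) *
      ∑ i, w i * (partialResidual n p Y A X β ψ0 τ j i - t * (ψ0 * β j * A i * X i j)) ^ 2 := by
  unfold Lstar partialResidual
  congr 1
  refine sum_congr rfl fun i _ => ?_
  rw [sum_update_eq_add_sum_erase (fun l s => ψ0 * s * β l * A i * X i l)]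
  ring

theorem Qobj_update_sub_Qobj_update_zero (lam alpha t : ℝ) :
    let u : Fin n → ℝ := fun i => ψ0 * β j * A i * X i j
    let R := partialResidual n p Y A X β ψ0 τ j
    Qobj n p Y A X w lam alpha β ψ0 (Function.update τ j t)
        - Qobj n p Y A X w lam alpha β ψ0 (Function.update τ j 0)
      = (∑ i, w i * u i ^ 2) / (2 * n) * t ^ 2 - 1 / (n : ℝ) * (∑ i, w i * u i * R i) * t
        + lam * alpha * |t| := by
  intro u R
  simp only [Qobj, Lstar_update, sum_mul_sub_mul_sq,
    sum_update_eq_add_sum_erase (fun _ s => |s|), abs_zero]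
  ring

end CoordinateObjective

theorem stmt8_general (n p : ℕ) (Y A : Fin n → ℝ) (X : Fin n → Fin p → ℝ)
    (w : Fin n → ℝ) (hw : ∀ i, 0 ≤ w i)
    (lam alpha : ℝ)
    (j : Fin p) (ψ0 : ℝ) (β τ : Fin p → ℝ)
    (uj : Fin n → ℝ) (huj : uj = fun i => ψ0 * β j * A i * X i j) :
    let RmjA : Fin n → ℝ := fun i =>
      Y i - (∑ l, X i l * β l) - ψ0 * A i
        - ∑ l ∈ Finset.univ.erase j, ψ0 * τ l * β l * A i * X i l
    let f : ℝ → ℝ := fun t => Qobj n p Y A X w lam alpha β ψ0 (Function.update τ j t)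
    (∀ t : ℝ, f 0 ≤ f t) ↔
      |1 / (n : ℝ) * ∑ i, w i * uj i * RmjA i| ≤ lam * alpha := by
  intro RmjA f
  subst huj
  have hcurv : 0 ≤ (∑ i, w i * (ψ0 * β j * A i * X i j) ^ 2) / (2 * n) :=
    div_nonneg (sum_nonneg fun i _ => mul_nonneg (hw i) (sq_nonneg _)) (by positivity)
  rw [← forall_nonneg_quadratic_add_abs_iff hcurv]
  refine forall_congr' fun t => ?_
  rw [← sub_nonneg]
  exact iff_of_eq <|
    congrArg (0 ≤ ·) (Qobj_update_sub_Qobj_update_zero Y A X w β ψ0 τ j lam alpha t)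

/-- With `ψ₀`, `β`, and `τ_ℓ (ℓ ≠ j)` fixed and `uⱼ = ψ₀βⱼ (A ∘ Xⱼ)`,
`τⱼ = 0` is a global minimizer of `τⱼ ↦ Q(β, ψ₀, τ)` iff
`|(1/n)·uⱼᵀW R₍₋ⱼA₎| ≤ λα`. -/
theorem stmt8 (n p : ℕ) (hn : 1 ≤ n) (Y A : Fin n → ℝ) (X : Fin n → Fin p → ℝ)
    (w : Fin n → ℝ) (hw : ∀ i, 0 ≤ w i) (hA : ∀ i, A i = 0 ∨ A i = 1)
    (lam alpha : ℝ) (hlam : 0 ≤ lam) (halpha : 0 < alpha ∧ alpha < 1)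
    (j : Fin p) (ψ0 : ℝ) (β τ : Fin p → ℝ)
    (uj : Fin n → ℝ) (huj : uj = fun i => ψ0 * β j * A i * X i j) :
    let RmjA : Fin n → ℝ := fun i =>
      Y i - (∑ l, X i l * β l) - ψ0 * A i
        - ∑ l ∈ Finset.univ.erase j, ψ0 * τ l * β l * A i * X i l
    let f : ℝ → ℝ := fun t => Qobj n p Y A X w lam alpha β ψ0 (Function.update τ j t)
    (∀ t : ℝ, f 0 ≤ f t) ↔
      |1 / (n : ℝ) * ∑ i, w i * uj i * RmjA i| ≤ lam * alpha :=
  stmt8_general n p Y A X w hw lam alpha j ψ0 β τ uj huj
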